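/- Let g̃ ≥ 0 be a random variable with finite mean, let 0 = g_0 < g_1 < ⋯ < g_L be quantization thresholds, and let g be the quantization of g̃ that maps g̃ ∈ [g_{ℓ−1}, g_ℓ) to g_{ℓ−1} and g̃ ≥ g_L to g_L. Then for any P > 0, E[log(1 + P·g̃)] − E[log(1 + P·g)] < max_{1≤ℓ≤L} log(1 + P(g_ℓ − g_{ℓ−1})) + (log e)·E[g̃]/g_L. -/

import Mathlib

/-!
Pointwise, a gain in the bin `[g_{ℓ-1}, g_ℓ)` loses at most `log(1 + P(g_ℓ - g_{ℓ-1}))`, because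
`1 + P x ≤ (1 + P a)(1 + P(x - a))` for `0 ≤ a ≤ x`. A gain `x ≥ g_L` loses at most
`log(x / g_L) ≤ (log e)(x / g_L - 1)` by `ln y ≤ y - 1`. The pointwise loss is therefore strictly below
`max_ℓ log(1 + P(g_ℓ - g_{ℓ-1})) + (log e) x / g_L`, and integrating keeps the strict inequality.
-/

open MeasureTheory ProbabilityTheory Real

theorem Fin.exists_castSucc_le_and_lt_succ {α : Type*} [LinearOrder α] {n : ℕ}
    {g : Fin (n + 1) → α} {x : α} (h0 : g 0 ≤ x) (hlast : x < g (Fin.last n)) :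
    ∃ i : Fin n, g i.castSucc ≤ x ∧ x < g i.succ := by
  classical
  let S := Finset.univ.filter fun k => x < g k
  have hS : S.Nonempty := ⟨Fin.last n, by simpa [S] using hlast⟩
  have hmin : x < g (S.min' hS) := by simpa [S] using S.min'_mem hS
  obtain ⟨i, hi⟩ := Fin.exists_succ_eq.2 fun h0' : S.min' hS = 0 => (h0'.symm ▸ hmin).not_ge h0
  refine ⟨i, not_lt.1 fun hlt => ?_, hi ▸ hmin⟩
  have : S.min' hS ≤ i.castSucc := S.min'_le _ (by simpa [S] using hlt)
  exact (hi ▸ this).not_gt i.castSucc_lt_succ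

namespace Real

variable {b P : ℝ}

theorem logb_one_add_mul_sub_logb_le (hb : 1 < b) (hP : 0 ≤ P) {a x : ℝ} (ha : 0 ≤ a)
    (hax : a ≤ x) :
    logb b (1 + P * x) - logb b (1 + P * a) ≤ logb b (1 + P * (x - a)) := by
  have hPa : 0 < 1 + P * a := by positivity
  have hPxa : 0 < 1 + P * (x - a) := by nlinarith
  rw [sub_le_iff_le_add, ← logb_mul hPxa.ne' hPa.ne']
  refine (logb_le_logb hb (by nlinarith) (by positivity)).2 ?_
  nlinarith [mul_nonneg (mul_nonneg (mul_nonneg hP hP) (sub_nonneg.2 hax)) ha]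

theorem logb_le_logb_exp_one_mul_sub_one (hb : 1 < b) {y : ℝ} (hy : 0 < y) :
    logb b y ≤ logb b (exp 1) * (y - 1) := by
  have hlogb : 0 < log b := log_pos hb
  rw [logb, logb, log_exp, one_div_mul_eq_div, div_le_div_iff_of_pos_right hlogb]
  exact log_le_sub_one_of_pos hy

theorem logb_one_add_mul_sub_logb_le_div (hb : 1 < b) (hP : 0 ≤ P) {a x : ℝ} (ha : 0 < a)
    (hax : a ≤ x) :
    logb b (1 + P * x) - logb b (1 + P * a) ≤ logb b (exp 1) * (x / a - 1) := by
  have hPa : 0 < 1 + P * a := by nlinarith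
  have hratio : (1 + P * x) / (1 + P * a) ≤ x / a := by
    rw [div_le_div_iff₀ hPa ha]; nlinarith
  rw [← logb_div (by nlinarith) hPa.ne']
  calc logb b ((1 + P * x) / (1 + P * a)) ≤ logb b (x / a) :=
        logb_le_logb_of_le hb (div_pos (by nlinarith) hPa) hratio
    _ ≤ logb b (exp 1) * (x / a - 1) :=
        logb_le_logb_exp_one_mul_sub_one hb (div_pos (ha.trans_le hax) ha)

end Real

theorem logb_one_add_mul_sub_logb_quantize_lt {L : ℕ} (hL : 0 < L) {g : Fin (L + 1) → ℝ}
    (hg0 : g 0 = 0) (hgmono : StrictMono g) {q : ℝ → ℝ}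
    (hq : ∀ x, ∀ ℓ : Fin L, x ∈ Set.Ico (g ℓ.castSucc) (g ℓ.succ) → q x = g ℓ.castSucc)
    (hqtop : ∀ x, g (Fin.last L) ≤ x → q x = g (Fin.last L))
    {b P x : ℝ} (hb : 1 < b) (hP : 0 < P) (hx : 0 ≤ x) :
    logb b (1 + P * x) - logb b (1 + P * q x)
      < (⨆ ℓ : Fin L, logb b (1 + P * (g ℓ.succ - g ℓ.castSucc)))
        + logb b (exp 1) * x / g (Fin.last L) := by
  set M := ⨆ ℓ : Fin L, logb b (1 + P * (g ℓ.succ - g ℓ.castSucc))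
  have hwidth (ℓ : Fin L) : 0 < g ℓ.succ - g ℓ.castSucc :=
    sub_pos.2 (hgmono Fin.castSucc_lt_succ)
  have hle_M (ℓ : Fin L) : logb b (1 + P * (g ℓ.succ - g ℓ.castSucc)) ≤ M :=
    le_ciSup (f := fun ℓ : Fin L => logb b (1 + P * (g ℓ.succ - g ℓ.castSucc)))
      (Set.finite_range _).bddAbove ℓ
  have hM : 0 < M :=
    (logb_pos hb (by nlinarith [hwidth ⟨0, hL⟩])).trans_le (hle_M ⟨0, hL⟩)
  have hgL : 0 < g (Fin.last L) := hg0 ▸ hgmono (show (0 : Fin (L + 1)) < Fin.last L from hL)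
  have hc : 0 < logb b (exp 1) := logb_pos hb (one_lt_exp_iff.2 one_pos)
  rcases le_or_gt (g (Fin.last L)) x with htop | hbin
  · rw [hqtop x htop]
    have := logb_one_add_mul_sub_logb_le_div hb hP.le hgL htop
    rw [mul_sub, mul_div_assoc'] at this
    linarith
  · obtain ⟨ℓ, hlo, hhi⟩ := Fin.exists_castSucc_le_and_lt_succ (hg0 ▸ hx) hbin
    rw [hq x ℓ ⟨hlo, hhi⟩]
    have hbin_loss := logb_one_add_mul_sub_logb_le hb hP.le
      (hg0 ▸ hgmono.monotone (Fin.zero_le _)) hlo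
    have hwider : logb b (1 + P * (x - g ℓ.castSucc))
        < logb b (1 + P * (g ℓ.succ - g ℓ.castSucc)) :=
      logb_lt_logb hb (by nlinarith) (by nlinarith)
    have : 0 ≤ logb b (exp 1) * x / g (Fin.last L) := by positivity
    linarith [hle_M ℓ]

theorem MeasureTheory.integral_lt_integral_of_forall_lt {α : Type*} [MeasurableSpace α]
    {μ : Measure α} [NeZero μ] {f g : α → ℝ} (hf : Integrable f μ) (hg : Integrable g μ)
    (hfg : ∀ x, f x < g x) : ∫ x, f x ∂μ < ∫ x, g x ∂μ := by
  rw [← sub_pos, ← integral_sub hg hf,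
    integral_pos_iff_support_of_nonneg (fun x => (sub_pos.2 (hfg x)).le) (hg.sub hf)]
  have : Function.support (fun x => g x - f x) = Set.univ :=
    Set.eq_univ_of_forall fun x => (sub_pos.2 (hfg x)).ne'
  rw [this]
  exact Measure.measure_univ_pos.2 (NeZero.ne μ)

theorem stmt10_general {Ω : Type*} [MeasureSpace Ω] [IsProbabilityMeasure (ℙ : Measure Ω)]
    {L : ℕ} (hL : 0 < L) (g : Fin (L + 1) → ℝ) (hg0 : g 0 = 0) (hgmono : StrictMono g)
    (G : Ω → ℝ) (hG0 : ∀ ω, 0 ≤ G ω) (hGint : Integrable G)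
    (q : ℝ → ℝ)
    (hq : ∀ x, ∀ ℓ : Fin L, x ∈ Set.Ico (g ℓ.castSucc) (g ℓ.succ) → q x = g ℓ.castSucc)
    (hqtop : ∀ x, g (Fin.last L) ≤ x → q x = g (Fin.last L))
    (P : ℝ) (hP : 0 < P)
    (hint1 : Integrable fun ω => Real.logb 2 (1 + P * G ω))
    (hint2 : Integrable fun ω => Real.logb 2 (1 + P * q (G ω))) :
    (∫ ω, Real.logb 2 (1 + P * G ω)) - ∫ ω, Real.logb 2 (1 + P * q (G ω))
      < (⨆ ℓ : Fin L, Real.logb 2 (1 + P * (g ℓ.succ - g ℓ.castSucc)))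
        + Real.logb 2 (Real.exp 1) * (∫ ω, G ω) / g (Fin.last L) := by
  set M := ⨆ ℓ : Fin L, logb 2 (1 + P * (g ℓ.succ - g ℓ.castSucc))
  set c := logb 2 (exp 1)
  have hbound_int : Integrable fun ω => M + c * G ω / g (Fin.last L) :=
    (integrable_const M).add ((hGint.const_mul c).div_const _)
  calc (∫ ω, logb 2 (1 + P * G ω)) - ∫ ω, logb 2 (1 + P * q (G ω))
      = ∫ ω, (logb 2 (1 + P * G ω) - logb 2 (1 + P * q (G ω))) :=
        (integral_sub hint1 hint2).symm
    _ < ∫ ω, (M + c * G ω / g (Fin.last L)) :=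
        integral_lt_integral_of_forall_lt (hint1.sub hint2) hbound_int fun ω =>
          logb_one_add_mul_sub_logb_quantize_lt hL hg0 hgmono hq hqtop one_lt_two hP (hG0 ω)
    _ = M + c * (∫ ω, G ω) / g (Fin.last L) := by
        rw [integral_add (integrable_const M) ((hGint.const_mul c).div_const _), integral_const,
          integral_div, integral_const_mul, probReal_univ, one_smul]

/-- Capacity loss from quantizing a nonnegative channel gain `g̃` to the lower
endpoints of the brackets `[g_{ℓ−1}, g_ℓ)` (and to `g_L` beyond `g_L`):
`E[log(1+P g̃)] − E[log(1+P g)] < max_ℓ log(1+P(g_ℓ−g_{ℓ−1})) + (log e)·E[g̃]/g_L`. -/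
theorem stmt10 {Ω : Type*} [MeasureSpace Ω] [IsProbabilityMeasure (ℙ : Measure Ω)]
    {L : ℕ} (hL : 0 < L) (g : Fin (L + 1) → ℝ) (hg0 : g 0 = 0) (hgmono : StrictMono g)
    (G : Ω → ℝ) (hGmeas : Measurable G) (hG0 : ∀ ω, 0 ≤ G ω) (hGint : Integrable G)
    (q : ℝ → ℝ)
    (hq : ∀ x, ∀ ℓ : Fin L, x ∈ Set.Ico (g ℓ.castSucc) (g ℓ.succ) → q x = g ℓ.castSucc)
    (hqtop : ∀ x, g (Fin.last L) ≤ x → q x = g (Fin.last L))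
    (P : ℝ) (hP : 0 < P)
    (hint1 : Integrable fun ω => Real.logb 2 (1 + P * G ω))
    (hint2 : Integrable fun ω => Real.logb 2 (1 + P * q (G ω))) :
    (∫ ω, Real.logb 2 (1 + P * G ω)) - ∫ ω, Real.logb 2 (1 + P * q (G ω))
      < (⨆ ℓ : Fin L, Real.logb 2 (1 + P * (g ℓ.succ - g ℓ.castSucc)))
        + Real.logb 2 (Real.exp 1) * (∫ ω, G ω) / g (Fin.last L) :=
  stmt10_general hL g hg0 hgmono G hG0 hGint q hq hqtop P hP hint1 hint2
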